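/- Let X be a Banach space, ρ = (ρ_j)_{j≥1} a sequence with ρ_j > 1 for all j, and y ∈ Y with Σ_{j≥1} |y_j|/ρ_j < ∞. For a bounded family v = (v_ν)_{ν∈F} in X define (T_{ρ,y} v)_ν := (ρ − |y|)^ν Σ_{μ≥ν} v_μ · (μ!/((μ−ν)! ν!)) · ρ^{−μ} y^{μ−ν}. Then sup_{ν∈F} ‖(T_{ρ,y} v)_ν‖_X ≤ (∏_{j=1}^∞ (1 − |y_j|/ρ_j)^{−1}) · sup_{μ∈F} ‖v_μ‖_X, the infinite product being finite under the stated summability assumption. -/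

import Mathlib

/-!
Write `μ = ν + σ` and `x_j = |y_j| / ρ_j`. The modulus of the `μ`-th coefficient is then
`ρ^{-ν} ∏_j C(σ_j + ν_j, ν_j) x_j^{σ_j}`, and the sum of these products over all `σ` factorises
into the negative binomial series `∏_j (1 - x_j)^{-(ν_j + 1)}` (summability follows from bounding
finite partial sums by finite products). The prefactor `(ρ - |y|)^ν ρ^{-ν} = ∏_j (1 - x_j)^{ν_j}`
cancels all but one power of each factor, leaving `∏_j (1 - x_j)^{-1}` times `sup_μ ‖v_μ‖`.
-/

open scoped BigOperators ENNReal

noncomputable section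

/-- The set `F` of finitely supported multi-indices. -/
abbrev MIdx : Type := ℕ →₀ ℕ

/-- `ρ^ν := ∏_j ρ_j^{ν_j}` for a finitely supported multi-index `ν`. -/
def mpow (ρ : ℕ → ℝ) (ν : MIdx) : ℝ := ν.prod fun j k => ρ j ^ k

/-- `μ!/((μ-ν)!ν!) = ∏_j C(μ_j, ν_j)` (meaningful for `ν ≤ μ`). -/
def mchoose (μ ν : MIdx) : ℕ := μ.prod fun j k => k.choose (ν j)

open Finset

section FinsuppProd

variable {ι : Type*} {G : ι → ℕ → ℝ} {S : ι → ℝ}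

theorem sum_finsuppProd_le_prod (hG0 : ∀ i, G i 0 = 1) (hG : ∀ i k, 0 ≤ G i k)
    (hS : ∀ i, HasSum (G i) (S i)) {s : Finset ι} {A : Finset (ι →₀ ℕ)}
    (hA : ∀ σ ∈ A, σ.support ⊆ s) : ∑ σ ∈ A, σ.prod G ≤ ∏ i ∈ s, S i := by
  classical
  -- Restricted to `s`, `A` lies in a box, over which the sum of products is the product of sums.
  let restrict : (ι →₀ ℕ) → s → ℕ := fun σ i => σ i
  have hinj : Set.InjOn restrict A := fun σ hσ τ hτ h => by
    ext i
    by_cases hi : i ∈ s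
    · exact congrFun h ⟨i, hi⟩
    · rw [Finsupp.notMem_support_iff.mp (mt (hA σ hσ ·) hi),
        Finsupp.notMem_support_iff.mp (mt (hA τ hτ ·) hi)]
  have hsub : A.image restrict ⊆ Fintype.piFinset fun i : s => A.image (· i) :=
    fun τ hτ => by
      obtain ⟨σ, hσ, rfl⟩ := mem_image.mp hτ
      exact Fintype.mem_piFinset.mpr fun i => mem_image_of_mem (· i) hσ
  calc ∑ σ ∈ A, σ.prod G = ∑ τ ∈ A.image restrict, ∏ i : s, G i (τ i) := by
        rw [sum_image hinj]
        refine sum_congr rfl fun σ hσ => ?_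
        rw [Finsupp.prod_of_support_subset σ (hA σ hσ) G fun i _ => hG0 i, ← prod_coe_sort]
    _ ≤ ∑ τ ∈ Fintype.piFinset fun i : s => A.image (· i), ∏ i : s, G i (τ i) :=
        sum_le_sum_of_subset_of_nonneg hsub fun τ _ _ => prod_nonneg fun i _ => hG i _
    _ = ∏ i : s, ∑ k ∈ A.image (· i), G i k := (prod_univ_sum _ _).symm
    _ ≤ ∏ i : s, S i := prod_le_prod (fun i _ => sum_nonneg fun k _ => hG i k)
        fun i _ => sum_le_hasSum _ (fun k _ => hG i k) (hS i)
    _ = ∏ i ∈ s, S i := prod_coe_sort s S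

theorem sum_finsuppProd_le (hG0 : ∀ i, G i 0 = 1) (hG : ∀ i k, 0 ≤ G i k)
    (hS : ∀ i, HasSum (G i) (S i)) {B : ℝ} (s₀ : Finset ι) (hB : ∀ s, s₀ ⊆ s → ∏ i ∈ s, S i ≤ B)
    (A : Finset (ι →₀ ℕ)) : ∑ σ ∈ A, σ.prod G ≤ B := by
  classical
  have hA : ∀ σ ∈ A, σ.support ⊆ s₀ ∪ A.sup Finsupp.support := fun σ hσ =>
    (le_sup (f := Finsupp.support) hσ).trans subset_union_right
  exact (sum_finsuppProd_le_prod hG0 hG hS hA).trans (hB _ subset_union_left)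

theorem summable_finsuppProd (hG0 : ∀ i, G i 0 = 1) (hG : ∀ i k, 0 ≤ G i k)
    (hS : ∀ i, HasSum (G i) (S i)) {B : ℝ} (s₀ : Finset ι) (hB : ∀ s, s₀ ⊆ s → ∏ i ∈ s, S i ≤ B) :
    Summable fun σ : ι →₀ ℕ => σ.prod G :=
  summable_of_sum_le (fun _ => prod_nonneg fun i _ => hG i _)
    (sum_finsuppProd_le hG0 hG hS s₀ hB)

theorem tsum_finsuppProd_le (hG0 : ∀ i, G i 0 = 1) (hG : ∀ i k, 0 ≤ G i k)
    (hS : ∀ i, HasSum (G i) (S i)) {B : ℝ} (s₀ : Finset ι) (hB : ∀ s, s₀ ⊆ s → ∏ i ∈ s, S i ≤ B) :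
    ∑' σ : ι →₀ ℕ, σ.prod G ≤ B :=
  (summable_finsuppProd hG0 hG hS s₀ hB).tsum_le_of_sum_le (sum_finsuppProd_le hG0 hG hS s₀ hB)

end FinsuppProd

theorem Real.multipliable_inv_one_sub {ι : Type*} {x : ι → ℝ} (hx : ∀ i, x i < 1)
    (hsum : Summable x) : Multipliable fun i => (1 - x i)⁻¹ := by
  refine Real.multipliable_of_summable_log (fun i => inv_pos.mpr (sub_pos.mpr (hx i))) ?_
  simpa [Real.log_inv, sub_eq_add_neg] using (Real.summable_log_one_add_of_summable hsum.neg).neg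

theorem Real.prod_le_tprod_of_one_le {ι : Type*} {f : ι → ℝ} (hf : Multipliable f)
    (h1 : ∀ i, 1 ≤ f i) (s : Finset ι) : ∏ i ∈ s, f i ≤ ∏' i, f i := by
  refine ge_of_tendsto hf.hasProd ?_
  filter_upwards [Filter.eventually_ge_atTop s] with t hst
  exact prod_le_prod_of_subset_of_one_le hst (fun i _ => zero_le_one.trans (h1 i))
    fun i _ _ => h1 i

theorem mpow_add (ρ : ℕ → ℝ) (ν σ : MIdx) : mpow ρ (ν + σ) = mpow ρ ν * mpow ρ σ :=
  Finsupp.prod_add_index' (fun _ => pow_zero _) fun _ => pow_add _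

theorem abs_mpow (y : ℕ → ℝ) (ν : MIdx) : |mpow y ν| = mpow (fun j => |y j|) ν := by
  simp only [mpow, Finsupp.prod, abs_prod, abs_pow]

theorem mpow_div (a b : ℕ → ℝ) (ν : MIdx) :
    mpow (fun j => a j / b j) ν = mpow a ν / mpow b ν := by
  simp only [mpow, Finsupp.prod, div_pow, prod_div_distrib]

theorem mpow_pos {ρ : ℕ → ℝ} (hρ : ∀ j, 0 < ρ j) (ν : MIdx) : 0 < mpow ρ ν :=
  prod_pos fun j _ => pow_pos (hρ j) _

theorem mpow_eq_prod_of_support_subset (ρ : ℕ → ℝ) {ν : MIdx} {s : Finset ℕ}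
    (hs : ν.support ⊆ s) : mpow ρ ν = ∏ j ∈ s, ρ j ^ ν j :=
  Finsupp.prod_of_support_subset ν hs _ fun _ _ => pow_zero _

theorem cast_mchoose_add_left (ν σ : MIdx) :
    (mchoose (ν + σ) ν : ℝ) = σ.prod fun j k => ((k + ν j).choose (ν j) : ℝ) := by
  rw [Finsupp.prod_of_support_subset σ (Finsupp.support_mono le_add_self) _
    fun j _ => by simp, mchoose, Finsupp.prod, Nat.cast_prod]
  exact prod_congr rfl fun j _ => by rw [Finsupp.add_apply, add_comm]

/-- The `σ`-th Taylor coefficient of `∏_j (1 - x_j)^{-(ν_j + 1)}`. -/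
def negBinomTerm (x : ℕ → ℝ) (ν σ : MIdx) : ℝ :=
  σ.prod fun j k => ((k + ν j).choose (ν j) : ℝ) * x j ^ k

section NegBinomTerm

variable {x : ℕ → ℝ}

theorem prod_one_div_one_sub_pow_succ_le (hx0 : ∀ j, 0 ≤ x j) (hx1 : ∀ j, x j < 1)
    (hx : Multipliable fun j => (1 - x j)⁻¹) (ν : MIdx) {s : Finset ℕ} (hs : ν.support ⊆ s) :
    ∏ j ∈ s, 1 / (1 - x j) ^ (ν j + 1) ≤
      (mpow (fun j => 1 - x j) ν)⁻¹ * ∏' j, (1 - x j)⁻¹ := by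
  have hpos : ∀ j, 0 < 1 - x j := fun j => sub_pos.mpr (hx1 j)
  rw [le_inv_mul_iff₀ (mpow_pos hpos ν), mpow_eq_prod_of_support_subset _ hs,
    ← prod_mul_distrib]
  calc ∏ j ∈ s, (1 - x j) ^ ν j * (1 / (1 - x j) ^ (ν j + 1)) = ∏ j ∈ s, (1 - x j)⁻¹ :=
        prod_congr rfl fun j _ => by field_simp [(hpos j).ne']; ring
    _ ≤ ∏' j, (1 - x j)⁻¹ := Real.prod_le_tprod_of_one_le hx
        (fun j => one_le_inv₀ (hpos j) |>.mpr (by linarith [hx0 j])) s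

theorem hasSum_choose_mul_pow (hx0 : ∀ j, 0 ≤ x j) (hx1 : ∀ j, x j < 1) (ν : MIdx) (j : ℕ) :
    HasSum (fun k => ((k + ν j).choose (ν j) : ℝ) * x j ^ k) (1 / (1 - x j) ^ (ν j + 1)) :=
  hasSum_choose_mul_geometric_of_norm_lt_one (ν j) ((Real.norm_of_nonneg (hx0 j)).trans_lt (hx1 j))

theorem summable_negBinomTerm (hx0 : ∀ j, 0 ≤ x j) (hx1 : ∀ j, x j < 1)
    (hx : Multipliable fun j => (1 - x j)⁻¹) (ν : MIdx) : Summable (negBinomTerm x ν) :=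
  summable_finsuppProd (by simp) (fun j k => by have := hx0 j; positivity)
    (hasSum_choose_mul_pow hx0 hx1 ν) ν.support
    fun _ => prod_one_div_one_sub_pow_succ_le hx0 hx1 hx ν

theorem mpow_one_sub_mul_tsum_negBinomTerm_le (hx0 : ∀ j, 0 ≤ x j) (hx1 : ∀ j, x j < 1)
    (hx : Multipliable fun j => (1 - x j)⁻¹) (ν : MIdx) :
    mpow (fun j => 1 - x j) ν * ∑' σ, negBinomTerm x ν σ ≤ ∏' j, (1 - x j)⁻¹ :=
  (le_inv_mul_iff₀ (mpow_pos (fun j => sub_pos.mpr (hx1 j)) ν)).mp <|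
    tsum_finsuppProd_le (by simp) (fun j k => by have := hx0 j; positivity)
      (hasSum_choose_mul_pow hx0 hx1 ν) ν.support
      fun _ => prod_one_div_one_sub_pow_succ_le hx0 hx1 hx ν

end NegBinomTerm

theorem abs_coeff_add_left {ρ : ℕ → ℝ} (hρ : ∀ j, 0 < ρ j) (y : ℕ → ℝ) (ν σ : MIdx) :
    |(mchoose (ν + σ) ν : ℝ) * (mpow ρ (ν + σ))⁻¹ * mpow y (ν + σ - ν)| =
      (mpow ρ ν)⁻¹ * negBinomTerm (fun j => |y j| / ρ j) ν σ := by
  have hx : negBinomTerm (fun j => |y j| / ρ j) ν σ =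
      (mchoose (ν + σ) ν : ℝ) * mpow (fun j => |y j| / ρ j) σ := by
    rw [negBinomTerm, Finsupp.prod_mul, cast_mchoose_add_left, mpow]
  have hρν := (mpow_pos hρ ν).ne'
  have hρσ := (mpow_pos hρ σ).ne'
  rw [hx, mpow_div, add_tsub_cancel_left, abs_mul, abs_mul, Nat.abs_cast, abs_inv,
    abs_of_pos (mpow_pos hρ _), abs_mpow, mpow_add]
  field_simp

def addLeftEquiv {α : Type*} [AddCommMonoid α] [PartialOrder α] [CanonicallyOrderedAdd α]
    [Sub α] [OrderedSub α] [AddLeftReflectLE α] (a : α) : α ≃ {b : α // a ≤ b} where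
  toFun c := ⟨a + c, le_self_add⟩
  invFun b := b.1 - a
  left_inv c := add_tsub_cancel_left a c
  right_inv b := Subtype.ext (add_tsub_cancel_of_le b.2)

section Operator

variable {X : Type*} [NormedAddCommGroup X] [NormedSpace ℝ X] {ρ y : ℕ → ℝ} {v : MIdx → X}
  {M : ℝ}

theorem multipliable_inv_one_sub_abs_div (hyρ : ∀ j, |y j| < ρ j)
    (hsum : Summable fun j => |y j| / ρ j) : Multipliable fun j => (1 - |y j| / ρ j)⁻¹ :=
  Real.multipliable_inv_one_sub
    (fun j => (div_lt_one ((abs_nonneg _).trans_lt (hyρ j))).mpr (hyρ j)) hsum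

theorem norm_coeff_smul_add_left_le (hρ : ∀ j, 0 < ρ j) (hv : ∀ μ, ‖v μ‖ ≤ M) (ν σ : MIdx) :
    ‖((mchoose (ν + σ) ν : ℝ) * (mpow ρ (ν + σ))⁻¹ * mpow y (ν + σ - ν)) • v (ν + σ)‖ ≤
      (mpow ρ ν)⁻¹ * negBinomTerm (fun j => |y j| / ρ j) ν σ * M := by
  rw [norm_smul, Real.norm_eq_abs, abs_coeff_add_left hρ]
  refine mul_le_mul_of_nonneg_left (hv _) (mul_nonneg (inv_nonneg.mpr (mpow_pos hρ ν).le) ?_)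
  exact prod_nonneg fun j _ => by have := hρ j; positivity

theorem summable_norm_coeff_smul (hyρ : ∀ j, |y j| < ρ j)
    (hsum : Summable fun j => |y j| / ρ j) (hv : ∀ μ, ‖v μ‖ ≤ M) (ν : MIdx) :
    Summable fun μ : {μ : MIdx // ν ≤ μ} =>
      ‖((mchoose μ.1 ν : ℝ) * (mpow ρ μ.1)⁻¹ * mpow y (μ.1 - ν)) • v μ.1‖ := by
  have hρ : ∀ j, 0 < ρ j := fun j => (abs_nonneg _).trans_lt (hyρ j)
  have hx0 : ∀ j, 0 ≤ |y j| / ρ j := fun j => by have := hρ j; positivity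
  have hx1 : ∀ j, |y j| / ρ j < 1 := fun j => (div_lt_one (hρ j)).mpr (hyρ j)
  refine (addLeftEquiv ν).summable_iff.mp <| Summable.of_nonneg_of_le (fun _ => norm_nonneg _)
    (norm_coeff_smul_add_left_le hρ hv ν) ?_
  exact ((summable_negBinomTerm hx0 hx1 (multipliable_inv_one_sub_abs_div hyρ hsum) ν).mul_left
    _).mul_right M

theorem mpow_mul_tsum_norm_coeff_smul_le (hyρ : ∀ j, |y j| < ρ j)
    (hsum : Summable fun j => |y j| / ρ j) (hv : ∀ μ, ‖v μ‖ ≤ M) (ν : MIdx) :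
    mpow (fun j => ρ j - |y j|) ν * ∑' μ : {μ : MIdx // ν ≤ μ},
      ‖((mchoose μ.1 ν : ℝ) * (mpow ρ μ.1)⁻¹ * mpow y (μ.1 - ν)) • v μ.1‖ ≤
      (∏' j, (1 - |y j| / ρ j)⁻¹) * M := by
  have hρ : ∀ j, 0 < ρ j := fun j => (abs_nonneg _).trans_lt (hyρ j)
  have hx0 : ∀ j, 0 ≤ |y j| / ρ j := fun j => by have := hρ j; positivity
  have hx1 : ∀ j, |y j| / ρ j < 1 := fun j => (div_lt_one (hρ j)).mpr (hyρ j)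
  have hM : 0 ≤ M := (norm_nonneg _).trans (hv 0)
  have hmpow :
      mpow (fun j => ρ j - |y j|) ν * (mpow ρ ν)⁻¹ = mpow (fun j => 1 - |y j| / ρ j) ν := by
    rw [← div_eq_mul_inv, ← mpow_div]
    congr 1
    funext j
    field_simp [(hρ j).ne']
  have hmult := multipliable_inv_one_sub_abs_div hyρ hsum
  have hsummable := summable_negBinomTerm hx0 hx1 hmult ν
  rw [← (addLeftEquiv ν).tsum_eq]
  calc _ ≤ mpow (fun j => ρ j - |y j|) ν *
          ∑' σ, (mpow ρ ν)⁻¹ * negBinomTerm (fun j => |y j| / ρ j) ν σ * M := by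
        refine mul_le_mul_of_nonneg_left ?_ (mpow_pos (fun j => sub_pos.mpr (hyρ j)) ν).le
        exact (summable_norm_coeff_smul hyρ hsum hv ν).comp_injective (addLeftEquiv ν).injective
          |>.tsum_le_tsum (norm_coeff_smul_add_left_le hρ hv ν) ((hsummable.mul_left _).mul_right M)
    _ = (mpow (fun j => 1 - |y j| / ρ j) ν *
          ∑' σ, negBinomTerm (fun j => |y j| / ρ j) ν σ) * M := by
        rw [tsum_mul_right, tsum_mul_left, ← hmpow]
        ring
    _ ≤ (∏' j, (1 - |y j| / ρ j)⁻¹) * M :=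
        mul_le_mul_of_nonneg_right (mpow_one_sub_mul_tsum_negBinomTerm_le hx0 hx1 hmult ν) hM

end Operator

theorem operator_linfty_bound_general
    {X : Type*} [NormedAddCommGroup X] [NormedSpace ℝ X]
    (ρ : ℕ → ℝ) (hρ : ∀ j, 1 < ρ j)
    (y : ℕ → ℝ) (hy : ∀ j, |y j| ≤ 1)
    (hsum : Summable fun j => |y j| / ρ j)
    (v : MIdx → X) (hv : BddAbove (Set.range fun ν : MIdx => ‖v ν‖))
    (T : MIdx → X)
    (hT : ∀ ν : MIdx, T ν = mpow (fun j => ρ j - |y j|) ν •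
      ∑' μ : {μ : MIdx // ν ≤ μ},
        ((mchoose μ.1 ν : ℝ) * (mpow ρ μ.1)⁻¹ * mpow y (μ.1 - ν)) • v μ.1) :
    Multipliable (fun j => (1 - |y j| / ρ j)⁻¹) ∧
    (∀ ν : MIdx, Summable fun μ : {μ : MIdx // ν ≤ μ} =>
      ‖((mchoose μ.1 ν : ℝ) * (mpow ρ μ.1)⁻¹ * mpow y (μ.1 - ν)) • v μ.1‖) ∧
    ∀ ν : MIdx, ‖T ν‖ ≤ (∏' j, (1 - |y j| / ρ j)⁻¹) * ⨆ μ : MIdx, ‖v μ‖ := by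
  have hyρ : ∀ j, |y j| < ρ j := fun j => (hy j).trans_lt (hρ j)
  have hvM : ∀ μ, ‖v μ‖ ≤ ⨆ μ : MIdx, ‖v μ‖ := le_ciSup hv
  refine ⟨multipliable_inv_one_sub_abs_div hyρ hsum, summable_norm_coeff_smul hyρ hsum hvM,
    fun ν => ?_⟩
  have hpos := mpow_pos (fun j => sub_pos.mpr (hyρ j)) ν
  rw [hT ν, norm_smul, Real.norm_of_nonneg hpos.le]
  calc _ ≤ mpow (fun j => ρ j - |y j|) ν * ∑' μ : {μ : MIdx // ν ≤ μ},
          ‖((mchoose μ.1 ν : ℝ) * (mpow ρ μ.1)⁻¹ * mpow y (μ.1 - ν)) • v μ.1‖ :=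
        mul_le_mul_of_nonneg_left
          (norm_tsum_le_tsum_norm (summable_norm_coeff_smul hyρ hsum hvM ν)) hpos.le
    _ ≤ _ := mpow_mul_tsum_norm_coeff_smul_le hyρ hsum hvM ν

/-- The operator `T_{ρ,y}` has `ℓ_∞(F,X) → ℓ_∞(F,X)` norm at most
`∏_j (1 - |y_j|/ρ_j)^{-1}`, provided `Σ_j |y_j|/ρ_j < ∞`: for a bounded family `v`,
`sup_ν ‖(T_{ρ,y} v)_ν‖ ≤ (∏_j (1 - |y_j|/ρ_j)^{-1}) ⨆_μ ‖v_μ‖`.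
The first conjunct asserts the convergence (finiteness) of the infinite product, and
the second asserts the absolute convergence of the series defining `T_{ρ,y} v`. -/
theorem operator_linfty_bound
    {X : Type*} [NormedAddCommGroup X] [NormedSpace ℝ X] [CompleteSpace X]
    (ρ : ℕ → ℝ) (hρ : ∀ j, 1 < ρ j)
    (y : ℕ → ℝ) (hy : ∀ j, |y j| ≤ 1)
    (hsum : Summable fun j => |y j| / ρ j)
    (v : MIdx → X) (hv : BddAbove (Set.range fun ν : MIdx => ‖v ν‖))
    (T : MIdx → X)
    (hT : ∀ ν : MIdx, T ν = mpow (fun j => ρ j - |y j|) ν •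
      ∑' μ : {μ : MIdx // ν ≤ μ},
        ((mchoose μ.1 ν : ℝ) * (mpow ρ μ.1)⁻¹ * mpow y (μ.1 - ν)) • v μ.1) :
    Multipliable (fun j => (1 - |y j| / ρ j)⁻¹) ∧
    (∀ ν : MIdx, Summable fun μ : {μ : MIdx // ν ≤ μ} =>
      ‖((mchoose μ.1 ν : ℝ) * (mpow ρ μ.1)⁻¹ * mpow y (μ.1 - ν)) • v μ.1‖) ∧
    ∀ ν : MIdx, ‖T ν‖ ≤ (∏' j, (1 - |y j| / ρ j)⁻¹) * ⨆ μ : MIdx, ‖v μ‖ :=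
  operator_linfty_bound_general ρ hρ y hy hsum v hv T hT
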